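/- Let Z and Z' be i.i.d. real random variables with E[e^{λZ}] < ∞, and let q(x) = x(eˣ - 1). Then for all λ ∈ ℝ, Ent(e^{λZ}) ≤ E[e^{λZ} q(λ(Z' - Z)₊)], where Ent(X) = E[X log X] - E[X] log E[X] for a nonnegative random variable X, and (·)₊ denotes the positive part. -/

import Mathlib

/-!
Write `W = λZ`. By Jensen `log 𝔼[e^W] ≥ 𝔼[W]`, and by independence `𝔼[e^W W'] = 𝔼[e^W] 𝔼[W]`,
so `Ent(e^W) ≤ 𝔼[D(W, W')]` with `D = expBregman ≥ 0`. For an exchangeable pair `(Z, Z')`,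
`𝔼[F(Z, Z')]` depends only on `F + F ∘ swap`, and both `D(λz, λz') + D(λz', λz)` and the
symmetrization of `e^{λz} q(λ(z' - z)₊)` equal `(λz' - λz)(e^{λz'} - e^{λz})`.
-/

open MeasureTheory ProbabilityTheory Real
open scoped ENNReal

/-- The Bregman divergence of `x ↦ x log x` between `exp a` and `exp b`. -/
noncomputable def expBregman (a b : ℝ) : ℝ := exp a * (a - b) - exp a + exp b

lemma expBregman_nonneg (a b : ℝ) : 0 ≤ expBregman a b := by
  have h : exp a * (b - a + 1) ≤ exp b := by
    simpa [← exp_add] using mul_le_mul_of_nonneg_left (add_one_le_exp (b - a)) (exp_pos a).le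
  unfold expBregman
  linarith

@[fun_prop]
lemma continuous_expBregman : Continuous fun p : ℝ × ℝ => expBregman p.1 p.2 := by
  unfold expBregman
  fun_prop

lemma expBregman_add_swap (a b : ℝ) :
    expBregman a b + expBregman b a = (b - a) * (exp b - exp a) := by
  unfold expBregman
  ring

lemma mul_exp_sub_one_nonneg (t : ℝ) : 0 ≤ t * (exp t - 1) := by
  rcases le_total 0 t with ht | ht
  · exact mul_nonneg ht (sub_nonneg.2 (one_le_exp ht))
  · exact mul_nonneg_of_nonpos_of_nonpos ht (sub_nonpos.2 (exp_le_one_iff.2 ht))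

lemma exp_mul_mul_posPart_add_swap (l z z' : ℝ) :
    exp (l * z) * (l * max (z' - z) 0 * (exp (l * max (z' - z) 0) - 1))
      + exp (l * z') * (l * max (z - z') 0 * (exp (l * max (z - z') 0) - 1))
      = (l * z' - l * z) * (exp (l * z') - exp (l * z)) := by
  rcases le_total z z' with h | h
  · rw [max_eq_left (sub_nonneg.2 h), max_eq_right (sub_nonpos.2 h)]
    simp only [mul_zero, exp_zero, sub_self, add_zero]
    rw [show l * z' = l * z + l * (z' - z) by ring, exp_add]
    ring
  · rw [max_eq_right (sub_nonpos.2 h), max_eq_left (sub_nonneg.2 h)]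
    simp only [mul_zero, exp_zero, sub_self, zero_add]
    rw [show l * z = l * z' + l * (z - z') by ring, exp_add]
    ring

section Exchangeable

variable {Ω α : Type*} [MeasurableSpace Ω] [MeasurableSpace α] {μ : Measure Ω}
  [IsFiniteMeasure μ] {X Y : Ω → α}

lemma lintegral_comp_swap_of_identDistrib (hX : Measurable X) (hY : Measurable Y)
    (hindep : IndepFun X Y μ) (hident : IdentDistrib X Y μ μ) {F : α × α → ℝ≥0∞}
    (hF : Measurable F) :
    ∫⁻ ω, F (Y ω, X ω) ∂μ = ∫⁻ ω, F (X ω, Y ω) ∂μ := by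
  rw [← lintegral_map hF (hY.prodMk hX), ← lintegral_map hF (hX.prodMk hY),
    hindep.symm.map_prod_eq_prod_map_map hY.aemeasurable hX.aemeasurable,
    hindep.map_prod_eq_prod_map_map hX.aemeasurable hY.aemeasurable, hident.map_eq]

lemma lintegral_comp_eq_of_add_swap_eq (hX : Measurable X) (hY : Measurable Y)
    (hindep : IndepFun X Y μ) (hident : IdentDistrib X Y μ μ) {F H : α × α → ℝ≥0∞}
    (hF : Measurable F) (hH : Measurable H) (hFH : ∀ p, F p + F p.swap = H p + H p.swap) :
    ∫⁻ ω, F (X ω, Y ω) ∂μ = ∫⁻ ω, H (X ω, Y ω) ∂μ := by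
  have two_mul_eq {K : α × α → ℝ≥0∞} (hK : Measurable K) :
      2 * ∫⁻ ω, K (X ω, Y ω) ∂μ = ∫⁻ ω, K (X ω, Y ω) + K (Y ω, X ω) ∂μ := by
    rw [lintegral_add_left (f := fun ω => K (X ω, Y ω)) (hK.comp (hX.prodMk hY)),
      lintegral_comp_swap_of_identDistrib hX hY hindep hident hK, two_mul]
  refine (ENNReal.mul_right_inj two_ne_zero ENNReal.ofNat_ne_top).1 ?_
  rw [two_mul_eq hF, two_mul_eq hH]
  exact lintegral_congr fun ω => hFH (X ω, Y ω)

end Exchangeable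

section Entropy

variable {Ω : Type*} [MeasurableSpace Ω] {μ : Measure Ω} [IsProbabilityMeasure μ]

lemma integral_le_log_integral_exp {W : Ω → ℝ} (hW : Integrable W μ)
    (hexp : Integrable (fun ω => exp (W ω)) μ) :
    ∫ ω, W ω ∂μ ≤ log (∫ ω, exp (W ω) ∂μ) := by
  have jensen : exp (∫ ω, W ω ∂μ) ≤ ∫ ω, exp (W ω) ∂μ :=
    convexOn_exp.map_integral_le continuous_exp.continuousOn isClosed_univ
      (by simp) hW hexp
  rw [← log_exp (∫ ω, W ω ∂μ)]
  exact log_le_log (exp_pos _) jensen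

lemma integral_mul_sub_mul_log_le_integral_expBregman {W W' : Ω → ℝ}
    (hW : Measurable W) (hW' : Measurable W') (hindep : IndepFun W W' μ)
    (hident : IdentDistrib W W' μ μ) (hexp : Integrable (fun ω => exp (W ω)) μ)
    (hexpW : Integrable (fun ω => exp (W ω) * W ω) μ)
    (hB : Integrable (fun ω => expBregman (W ω) (W' ω)) μ) :
    (∫ ω, exp (W ω) * W ω ∂μ) - (∫ ω, exp (W ω) ∂μ) * log (∫ ω, exp (W ω) ∂μ) ≤
      ∫ ω, expBregman (W ω) (W' ω) ∂μ := by
  have hident_exp : IdentDistrib (fun ω => exp (W ω)) (fun ω => exp (W' ω)) μ μ :=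
    hident.comp measurable_exp
  have hexp' : Integrable (fun ω => exp (W' ω)) μ := hident_exp.integrable_iff.1 hexp
  have hindep_exp : IndepFun (fun ω => exp (W ω)) W' μ := hindep.comp measurable_exp measurable_id
  have hcross : Integrable (fun ω => exp (W ω) * W' ω) μ := by
    refine (((hexpW.sub hexp).add hexp').sub hB).congr (ae_of_all _ fun ω => ?_)
    simp only [Pi.add_apply, Pi.sub_apply, expBregman]
    ring
  have hW'_int : Integrable W' μ := by
    refine hindep_exp.integrable_right_of_integrable_op (· * ·) 1 one_ne_zero
      (fun x y => by simp [enorm_mul]) hcross (by fun_prop) hW'.aestronglyMeasurable ?_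
    intro h
    obtain ⟨ω, hω⟩ := h.exists
    exact (exp_pos (W ω)).ne' hω
  have hW_int : Integrable W μ := hident.integrable_iff.2 hW'_int
  have hcross_eq : ∫ ω, exp (W ω) * W' ω ∂μ = (∫ ω, exp (W ω) ∂μ) * ∫ ω, W ω ∂μ := by
    rw [hident.integral_eq]
    exact hindep_exp.integral_mul_eq_mul_integral (by fun_prop) hW'.aestronglyMeasurable
  have hB_eq : ∫ ω, expBregman (W ω) (W' ω) ∂μ =
      (∫ ω, exp (W ω) * W ω ∂μ) - (∫ ω, exp (W ω) ∂μ) * ∫ ω, W ω ∂μ := by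
    simp only [expBregman, mul_sub]
    rw [integral_add, integral_sub, integral_sub hexpW hcross, hcross_eq,
      ← hident_exp.integral_eq]
    · ring
    all_goals fun_prop
  have hjensen := integral_le_log_integral_exp hW_int hexp
  have hpos : 0 ≤ ∫ ω, exp (W ω) ∂μ := integral_nonneg fun ω => (exp_pos _).le
  rw [hB_eq]
  nlinarith [mul_le_mul_of_nonneg_left hjensen hpos]

lemma ofReal_integral_mul_sub_mul_log_le_lintegral_expBregman {W W' : Ω → ℝ}
    (hW : Measurable W) (hW' : Measurable W') (hindep : IndepFun W W' μ)
    (hident : IdentDistrib W W' μ μ) (hexp : Integrable (fun ω => exp (W ω)) μ)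
    (hexpW : Integrable (fun ω => exp (W ω) * W ω) μ) :
    ENNReal.ofReal ((∫ ω, exp (W ω) * W ω ∂μ) -
        (∫ ω, exp (W ω) ∂μ) * log (∫ ω, exp (W ω) ∂μ)) ≤
      ∫⁻ ω, ENNReal.ofReal (expBregman (W ω) (W' ω)) ∂μ := by
  have hB_nonneg : 0 ≤ᵐ[μ] fun ω => expBregman (W ω) (W' ω) :=
    ae_of_all _ fun ω => expBregman_nonneg _ _
  by_cases hfin : ∫⁻ ω, ENNReal.ofReal (expBregman (W ω) (W' ω)) ∂μ = ∞
  · exact hfin ▸ le_top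
  have hB : Integrable (fun ω => expBregman (W ω) (W' ω)) μ :=
    ⟨by fun_prop, (hasFiniteIntegral_iff_ofReal hB_nonneg).2 (lt_top_iff_ne_top.2 hfin)⟩
  rw [← ofReal_integral_eq_lintegral_ofReal hB hB_nonneg]
  exact ENNReal.ofReal_le_ofReal
    (integral_mul_sub_mul_log_le_integral_expBregman hW hW' hindep hident hexp hexpW hB)

end Entropy

/-- Symmetrized logarithmic Sobolev inequality. The right-hand side is stated as a
Lebesgue integral of the nonnegative integrand, so the inequality holds trivially
when that integral is infinite. -/
theorem stmt_16 {Ω : Type*} [MeasurableSpace Ω] (μ : Measure Ω) [IsProbabilityMeasure μ]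
    (Z Z' : Ω → ℝ) (hZ : Measurable Z) (hZ' : Measurable Z')
    (hindep : ProbabilityTheory.IndepFun Z Z' μ)
    (hident : ProbabilityTheory.IdentDistrib Z Z' μ μ)
    (lam : ℝ) (hint : Integrable (fun ω => exp (lam * Z ω)) μ)
    (hint' : Integrable (fun ω => exp (lam * Z ω) * Real.log (exp (lam * Z ω))) μ) :
    ENNReal.ofReal
        ((∫ ω, exp (lam * Z ω) * Real.log (exp (lam * Z ω)) ∂μ) -
          (∫ ω, exp (lam * Z ω) ∂μ) * Real.log (∫ ω, exp (lam * Z ω) ∂μ)) ≤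
      ∫⁻ ω, ENNReal.ofReal
        (exp (lam * Z ω) *
          ((lam * max (Z' ω - Z ω) 0) * (exp (lam * max (Z' ω - Z ω) 0) - 1))) ∂μ := by
  simp only [log_exp] at hint' ⊢
  have hsymm := lintegral_comp_eq_of_add_swap_eq hZ hZ' hindep hident
    (F := fun p => ENNReal.ofReal (exp (lam * p.1) *
      (lam * max (p.2 - p.1) 0 * (exp (lam * max (p.2 - p.1) 0) - 1))))
    (H := fun p => ENNReal.ofReal (expBregman (lam * p.1) (lam * p.2)))
    (by fun_prop) (by fun_prop) fun p => by
      rw [← ENNReal.ofReal_add (mul_nonneg (exp_pos _).le (mul_exp_sub_one_nonneg _))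
          (mul_nonneg (exp_pos _).le (mul_exp_sub_one_nonneg _)),
        ← ENNReal.ofReal_add (expBregman_nonneg _ _) (expBregman_nonneg _ _),
        Prod.fst_swap, Prod.snd_swap, expBregman_add_swap]
      exact congrArg ENNReal.ofReal (exp_mul_mul_posPart_add_swap lam p.1 p.2)
  rw [hsymm]
  exact ofReal_integral_mul_sub_mul_log_le_lintegral_expBregman (hZ.const_mul lam)
    (hZ'.const_mul lam) (hindep.comp (measurable_const_mul lam) (measurable_const_mul lam))
    (hident.comp (measurable_const_mul lam)) hint hint'
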